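/- Let k, ℓ, r be integers with 2 ≤ ℓ ≤ k−1 and 0 ≤ r < ℓ/2. Let B be a set of k vertices, let Υ ⊆ B with |Υ| = ℓ, and let F be a fixed forest on vertex set Υ having exactly r edges. Then the number of labelled trees T on vertex set B whose induced subgraph on Υ equals F is at most 2^r · (k−ℓ)^{k−r−2} · (ℓ+1)^{k−ℓ−1}. -/

import Mathlib

/-!
Root every tree `T` on `B` inducing `F` at a vertex `b₀ ∉ Υ`; then `T` is determined by its
parent map. Each edge of `F` has a child endpoint, whose parent is the other endpoint: choosing
these costs at most `2^r`, and the children are exactly the `r` vertices of `Υ` whose parent lies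
in `Υ`. The other `ℓ - r` vertices of `Υ` have their parent outside `Υ` (`k - ℓ` choices each), and
each of the `k - ℓ - 1` vertices outside `Υ` other than `b₀` has one of `k - 1` parents. The
resulting bound `2^r (k-ℓ)^(ℓ-r) (k-1)^(k-ℓ-1)` is converted with
`(t+1) (t+ℓ)^t ≤ ((t+1)(ℓ+1))^t` for `t = k - ℓ - 1`, which holds as `t + 1 ≤ 2^t` and
`2 (t+ℓ) ≤ (t+1)(ℓ+1)`.
-/

namespace SimpleGraph.IsTree

variable {V : Type*} {G : SimpleGraph V} (hG : G.IsTree) (root : V)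

noncomputable def pathFrom (v : V) : G.Walk root v :=
  (hG.existsUnique_path root v).exists.choose

lemma isPath_pathFrom (v : V) : (hG.pathFrom root v).IsPath :=
  (hG.existsUnique_path root v).exists.choose_spec

lemma eq_pathFrom {v : V} {p : G.Walk root v} (hp : p.IsPath) : p = hG.pathFrom root v :=
  (hG.existsUnique_path root v).unique hp (hG.isPath_pathFrom root v)

noncomputable def parent (v : V) : V :=
  (hG.pathFrom root v).penultimate

variable {root}

@[simp]
lemma parent_root : hG.parent root root = root := by
  rw [parent, ← hG.eq_pathFrom root Walk.IsPath.nil, Walk.penultimate_nil]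

lemma not_nil_pathFrom {v : V} (hv : v ≠ root) : ¬(hG.pathFrom root v).Nil :=
  Walk.not_nil_of_ne hv.symm

lemma parent_adj {v : V} (hv : v ≠ root) : G.Adj (hG.parent root v) v :=
  Walk.adj_penultimate (hG.not_nil_pathFrom hv)

lemma parent_ne {v : V} (hv : v ≠ root) : hG.parent root v ≠ v :=
  (hG.parent_adj hv).ne

lemma length_pathFrom_parent {v : V} (hv : v ≠ root) :
    (hG.pathFrom root (hG.parent root v)).length + 1 = (hG.pathFrom root v).length := by
  rw [hG.isAcyclic.path_concat (hG.isPath_pathFrom root _) (hG.isPath_pathFrom root v)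
    (hG.parent_adj hv) (Walk.getVert_mem_support _ _), Walk.length_concat]

lemma parent_parent_ne {v : V} (hv : v ≠ root) : hG.parent root (hG.parent root v) ≠ v := by
  intro h
  by_cases hp : hG.parent root v = root
  · rw [hp, parent_root] at h
    exact hv h.symm
  · have h₁ := hG.length_pathFrom_parent hv
    have h₂ := hG.length_pathFrom_parent hp
    rw [h] at h₂
    omega

lemma parent_eq_or_parent_eq_of_adj {u w : V} (h : G.Adj u w) :
    hG.parent root u = w ∨ hG.parent root w = u := by
  by_cases hu : u ∈ (hG.pathFrom root w).support
  · exact .inr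
      (hG.isAcyclic.eq_penultimate_of_adj_end (hG.isPath_pathFrom root w) h.symm hu).symm
  · refine .inl (hG.isAcyclic.eq_penultimate_of_adj_end (hG.isPath_pathFrom root u) h ?_).symm
    exact hG.isAcyclic.mem_support_of_ne_mem_support_of_adj_of_isPath
      (hG.isPath_pathFrom root u) (hG.isPath_pathFrom root w) h hu

lemma adj_iff_parent {u w : V} :
    G.Adj u w ↔ (u ≠ root ∧ hG.parent root u = w) ∨ (w ≠ root ∧ hG.parent root w = u) := by
  constructor
  · intro h
    rcases hG.parent_eq_or_parent_eq_of_adj (root := root) h with h' | h'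
    · exact .inl ⟨fun hu => h.ne (by subst hu; simpa using h'), h'⟩
    · exact .inr ⟨fun hw => h.ne (by subst hw; simpa using h'.symm), h'⟩
  · rintro (⟨hu, rfl⟩ | ⟨hw, rfl⟩)
    · exact (hG.parent_adj hu).symm
    · exact hG.parent_adj hw

lemma eq_of_parent_eq {G' : SimpleGraph V} (hG' : G'.IsTree)
    (h : ∀ v, hG.parent root v = hG'.parent root v) : G = G' := by
  ext u w
  rw [hG.adj_iff_parent, hG'.adj_iff_parent, h, h]

end SimpleGraph.IsTree

lemma Nat.card_le_card_mul_of_card_fiber_le {α β : Type*} [Finite α] [Finite β] (f : α → β)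
    {n : ℕ} (h : ∀ b, Nat.card {a // f a = b} ≤ n) : Nat.card α ≤ Nat.card β * n := by
  have := Fintype.ofFinite β
  rw [← Nat.card_congr (Equiv.sigmaFiberEquiv f), Nat.card_sigma, Nat.card_eq_fintype_card,
    ← smul_eq_mul, ← Finset.card_univ]
  exact Finset.sum_le_card_nsmul _ _ _ fun b _ => h b

lemma Sym2.card_mem_le_two {α : Type*} (z : Sym2 α) : Nat.card {a // a ∈ z} ≤ 2 := by
  induction z using Sym2.ind with
  | _ a b =>
    calc Nat.card {x // x ∈ s(a, b)} = Nat.card ({a, b} : Set α) :=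
          Nat.card_congr (Equiv.subtypeEquivRight fun _ => Sym2.mem_iff)
      _ = ({a, b} : Set α).ncard := Nat.card_coe_set_eq _
      _ ≤ 2 := (Set.ncard_insert_le _ _).trans (by simp)

lemma Nat.card_subtype_notMem_range {α ι : Type*} [Finite α] {f : ι → α}
    (hf : Function.Injective f) : Nat.card {a // a ∉ Set.range f} = Nat.card α - Nat.card ι := by
  rw [← Nat.card_range_of_injective hf, Nat.card_coe_set_eq]
  exact Set.ncard_compl _

lemma Nat.card_subtype_ne {α : Type*} [Finite α] (a : α) :
    Nat.card {b // b ≠ a} = Nat.card α - 1 := by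
  rw [← Set.ncard_singleton a, ← Set.ncard_compl]
  rfl

lemma Nat.card_pi_subtype_ne {α : Type*} [Finite α] (s : Set α) :
    Nat.card ((a : s) → {b // b ≠ (a : α)}) = (Nat.card α - 1) ^ Nat.card s := by
  have := Fintype.ofFinite s
  simp only [Nat.card_pi, Nat.card_subtype_ne, Finset.prod_const, Finset.card_univ,
    Nat.card_eq_fintype_card]

abbrev SimpleGraph.TreeExtension {B : Type*} {Υ : Set B} (F : SimpleGraph Υ) :=
  {T : SimpleGraph B // T.IsTree ∧ T.induce Υ = F}

namespace SimpleGraph.TreeExtension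

variable {B : Type*} {Υ : Set B} {F : SimpleGraph Υ} (T : F.TreeExtension) (b₀ : B)

lemma adj_iff {u w : Υ} : F.Adj u w ↔ T.1.Adj u w := by
  obtain ⟨T, -, rfl⟩ := T
  rfl

lemma exists_child (e : F.edgeSet) :
    ∃ v : Υ, v ∈ e.1 ∧ e.1.map (↑) = s((v : B), T.2.1.parent b₀ v) := by
  obtain ⟨e, he⟩ := e
  induction e using Sym2.ind with
  | _ u w =>
    rcases T.2.1.parent_eq_or_parent_eq_of_adj (root := b₀) ((T.adj_iff).mp he) with h | h
    · exact ⟨u, Sym2.mem_mk_left u w, by rw [h, Sym2.map_mk]⟩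
    · exact ⟨w, Sym2.mem_mk_right u w, by rw [h, Sym2.map_mk, Sym2.eq_swap]⟩

noncomputable def child (e : F.edgeSet) : {v : Υ // v ∈ e.1} :=
  ⟨(T.exists_child b₀ e).choose, (T.exists_child b₀ e).choose_spec.1⟩

lemma map_val_eq_child (e : F.edgeSet) :
    e.1.map (↑) = s(((T.child b₀ e : Υ) : B), T.2.1.parent b₀ (T.child b₀ e : Υ)) :=
  (T.exists_child b₀ e).choose_spec.2

lemma child_injective : Function.Injective fun e => (T.child b₀ e : Υ) := by
  intro e e' h
  apply Subtype.ext
  apply Sym2.map.injective Subtype.val_injective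
  rw [T.map_val_eq_child, T.map_val_eq_child]
  simp only at h
  rw [h]

lemma mem_range_child (hb₀ : b₀ ∉ Υ) {v : Υ} (hv : T.2.1.parent b₀ v ∈ Υ) :
    v ∈ Set.range fun e => (T.child b₀ e : Υ) := by
  have hvb : (v : B) ≠ b₀ := fun h => hb₀ (h ▸ v.2)
  have hadj : F.Adj v ⟨_, hv⟩ := (T.adj_iff).mpr (T.2.1.parent_adj hvb).symm
  refine ⟨⟨s(v, ⟨_, hv⟩), hadj⟩, ?_⟩
  have h := T.map_val_eq_child b₀ ⟨s(v, ⟨_, hv⟩), hadj⟩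
  rw [Sym2.map_mk, Sym2.eq_iff] at h
  rcases h with ⟨h, -⟩ | ⟨h, h'⟩
  · exact Subtype.ext h.symm
  · exact (T.2.1.parent_parent_ne hvb ((congrArg _ h').trans h.symm)).elim

lemma eq_of_child_eq {T T' : F.TreeExtension} (hc : T.child b₀ = T'.child b₀)
    (h : ∀ v, (∀ e, ((T.child b₀ e : Υ) : B) ≠ v) → T.2.1.parent b₀ v = T'.2.1.parent b₀ v) :
    T = T' := by
  refine Subtype.ext (T.2.1.eq_of_parent_eq (root := b₀) T'.2.1 fun v => ?_)
  by_cases hv : ∃ e, ((T.child b₀ e : Υ) : B) = v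
  · obtain ⟨e, rfl⟩ := hv
    have h' := T'.map_val_eq_child b₀ e
    rw [← hc] at h'
    exact Sym2.congr_right.mp ((T.map_val_eq_child b₀ e).symm.trans h')
  · exact h v (not_exists.mp hv)

lemma card_fiber_child_le [Finite B] (hb₀ : b₀ ∉ Υ)
    (c : (e : F.edgeSet) → {v : Υ // v ∈ e.1}) :
    Nat.card {T : F.TreeExtension // T.child b₀ = c} ≤
      Nat.card ↥Υᶜ ^ (Nat.card Υ - Nat.card F.edgeSet) * (Nat.card B - 1) ^ (Nat.card ↥Υᶜ - 1) := by
  rcases isEmpty_or_nonempty {T : F.TreeExtension // T.child b₀ = c} with _ | ⟨⟨T₀, rfl⟩⟩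
  · simp
  let code (T : {T : F.TreeExtension // T.child b₀ = T₀.child b₀}) :
      ({v : Υ // v ∉ Set.range fun e => (T₀.child b₀ e : Υ)} → ↥Υᶜ) ×
        ((v : ↥(Υᶜ \ {b₀})) → {b // b ≠ (v : B)}) :=
    (fun v => ⟨T.1.2.1.parent b₀ v,
      fun h => v.2 (by simpa only [T.2] using T.1.mem_range_child b₀ hb₀ h)⟩,
     fun v => ⟨T.1.2.1.parent b₀ v, T.1.2.1.parent_ne v.2.2⟩)
  have hcode : Function.Injective code := by
    intro T T' h
    refine Subtype.ext (eq_of_child_eq b₀ (T.2.trans T'.2.symm) fun v hv => ?_)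
    by_cases hvb : v = b₀
    · simp [hvb]
    by_cases hvΥ : v ∈ Υ
    · have hv' : ⟨v, hvΥ⟩ ∉ Set.range fun e => (T₀.child b₀ e : Υ) := by
        rintro ⟨e, he⟩
        exact hv e (by rw [T.2]; exact congrArg Subtype.val he)
      exact congrArg Subtype.val (congrFun (congrArg Prod.fst h) ⟨_, hv'⟩)
    · exact congrArg Subtype.val (congrFun (congrArg Prod.snd h) ⟨v, hvΥ, hvb⟩)
  calc Nat.card {T : F.TreeExtension // T.child b₀ = T₀.child b₀}
      ≤ Nat.card (({v : Υ // v ∉ Set.range fun e => (T₀.child b₀ e : Υ)} → ↥Υᶜ) ×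
          ((v : ↥(Υᶜ \ {b₀})) → {b // b ≠ (v : B)})) := Nat.card_le_card_of_injective code hcode
    _ = _ := by
      rw [Nat.card_prod, Nat.card_fun, Nat.card_pi_subtype_ne,
        Nat.card_subtype_notMem_range (T₀.child_injective b₀), Nat.card_coe_set_eq (Υᶜ \ {b₀}),
        Set.ncard_sdiff_singleton_of_mem (show b₀ ∈ Υᶜ from hb₀), Nat.card_coe_set_eq Υᶜ]

lemma card_le [Finite B] (hΥ : Υᶜ.Nonempty) :
    Nat.card F.TreeExtension ≤ 2 ^ Nat.card F.edgeSet * (Nat.card ↥Υᶜ ^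
      (Nat.card Υ - Nat.card F.edgeSet) * (Nat.card B - 1) ^ (Nat.card ↥Υᶜ - 1)) := by
  obtain ⟨b₀, hb₀⟩ := hΥ
  have := Fintype.ofFinite F.edgeSet
  have hchild : Nat.card ((e : F.edgeSet) → {v : Υ // v ∈ e.1}) ≤ 2 ^ Nat.card F.edgeSet := by
    rw [Nat.card_pi, Nat.card_eq_fintype_card, ← Finset.card_univ]
    exact Finset.prod_le_pow_card _ _ _ fun e _ => Sym2.card_mem_le_two e.1
  calc Nat.card F.TreeExtension
      ≤ Nat.card ((e : F.edgeSet) → {v : Υ // v ∈ e.1}) * _ :=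
        Nat.card_le_card_mul_of_card_fiber_le (child · b₀) (card_fiber_child_le b₀ hb₀)
    _ ≤ _ := Nat.mul_le_mul_right _ hchild

end SimpleGraph.TreeExtension

lemma succ_mul_add_pow_le {m : ℕ} (hm : 1 ≤ m) (t : ℕ) :
    (t + 1) * (t + m) ^ t ≤ ((t + 1) * (m + 1)) ^ t := by
  rcases Nat.eq_zero_or_pos t with rfl | ht
  · simp
  calc (t + 1) * (t + m) ^ t
      ≤ 2 ^ t * (t + m) ^ t := Nat.mul_le_mul_right _ Nat.lt_two_pow_self
    _ = (2 * (t + m)) ^ t := (Nat.mul_pow _ _ _).symm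
    _ ≤ ((t + 1) * (m + 1)) ^ t := Nat.pow_le_pow_left (by nlinarith) t

lemma pow_mul_pow_le_pow_mul_pow {k ℓ r : ℕ} (hr : r < ℓ) (hℓk : ℓ < k) :
    (k - ℓ) ^ (ℓ - r) * (k - 1) ^ (k - ℓ - 1) ≤ (k - ℓ) ^ (k - r - 2) * (ℓ + 1) ^ (k - ℓ - 1) := by
  obtain ⟨t, ht⟩ : ∃ t, k - ℓ = t + 1 := ⟨k - ℓ - 1, by omega⟩
  obtain ⟨a, ha⟩ : ∃ a, ℓ - r = a + 1 := ⟨ℓ - r - 1, by omega⟩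
  rw [show k - ℓ - 1 = t by omega, show k - 1 = t + ℓ by omega,
    show k - r - 2 = a + t by omega, ht, ha]
  calc (t + 1) ^ (a + 1) * (t + ℓ) ^ t
      = (t + 1) ^ a * ((t + 1) * (t + ℓ) ^ t) := by ring
    _ ≤ (t + 1) ^ a * ((t + 1) * (ℓ + 1)) ^ t :=
        Nat.mul_le_mul_left _ (succ_mul_add_pow_le (by omega) t)
    _ = (t + 1) ^ (a + t) * (ℓ + 1) ^ t := by rw [mul_pow, pow_add]; ring

theorem tree_extension_count_small_r_general {B : Type*} [Fintype B] (k ℓ r : ℕ)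
    (hB : Fintype.card B = k) (Υ : Finset B) (hΥ : Υ.card = ℓ)
    (hℓk : ℓ < k)
    (hr : 2 * r < ℓ)
    (F : SimpleGraph (↑Υ : Set B)) (hFr : F.edgeSet.ncard = r) :
    (Nat.card {T : SimpleGraph B // T.IsTree ∧ T.induce (↑Υ : Set B) = F} : ℝ) ≤
      (2 : ℝ) ^ r * ((k : ℝ) - (ℓ : ℝ)) ^ (k - r - 2) * ((ℓ : ℝ) + 1) ^ (k - ℓ - 1) := by
  have hB' : Nat.card B = k := Nat.card_eq_fintype_card.trans hB
  have hΥ' : Nat.card (↑Υ : Set B) = ℓ := by rw [Nat.card_coe_set_eq, Set.ncard_coe_finset, hΥ]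
  have hΥc : Nat.card ↥(↑Υ : Set B)ᶜ = k - ℓ := by
    rw [Nat.card_coe_set_eq, Set.ncard_compl, ← Nat.card_coe_set_eq, hΥ', hB']
  have hFr' : Nat.card F.edgeSet = r := by rw [Nat.card_coe_set_eq, hFr]
  have hne : (↑Υ : Set B)ᶜ.Nonempty := by
    rw [← Set.ncard_pos, ← Nat.card_coe_set_eq, hΥc]
    omega
  have hcount := SimpleGraph.TreeExtension.card_le (F := F) hne
  rw [hB', hΥ', hΥc, hFr'] at hcount
  have key : Nat.card F.TreeExtension ≤ 2 ^ r * (k - ℓ) ^ (k - r - 2) * (ℓ + 1) ^ (k - ℓ - 1) :=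
    hcount.trans (by
      rw [mul_assoc]
      exact Nat.mul_le_mul_left _ (pow_mul_pow_le_pow_mul_pow (by omega) hℓk))
  calc (Nat.card F.TreeExtension : ℝ)
      ≤ ((2 ^ r * (k - ℓ) ^ (k - r - 2) * (ℓ + 1) ^ (k - ℓ - 1) : ℕ) : ℝ) := by exact_mod_cast key
    _ = _ := by push_cast [Nat.cast_sub hℓk.le]; ring

/-- Let `B` be a vertex set of size `k`, `Υ ⊆ B` of size `ℓ`, and `F` a fixed forest on `Υ`
with exactly `r` edges, where `2 ≤ ℓ ≤ k−1` and `0 ≤ r < ℓ/2`. Then the number of labelled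
trees on `B` inducing `F` on `Υ` is at most `2^r · (k−ℓ)^{k−r−2} · (ℓ+1)^{k−ℓ−1}`. -/
theorem tree_extension_count_small_r {B : Type*} [Fintype B] (k ℓ r : ℕ)
    (hB : Fintype.card B = k) (Υ : Finset B) (hΥ : Υ.card = ℓ)
    (hℓ2 : 2 ≤ ℓ) (hℓk : ℓ < k)
    (hr : 2 * r < ℓ)
    (F : SimpleGraph (↑Υ : Set B)) (hF : F.IsAcyclic) (hFr : F.edgeSet.ncard = r) :
    (Nat.card {T : SimpleGraph B // T.IsTree ∧ T.induce (↑Υ : Set B) = F} : ℝ) ≤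
      (2 : ℝ) ^ r * ((k : ℝ) - (ℓ : ℝ)) ^ (k - r - 2) * ((ℓ : ℝ) + 1) ^ (k - ℓ - 1) :=
  tree_extension_count_small_r_general k ℓ r hB Υ hΥ hℓk hr F hFr
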